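/- arXiv:2204.07139 — 2 statements merged into one kernel-verified Lean document; each statement's English description precedes it below -/
import Mathlib

section
/- Let x and y be two nonzero pure octonions in the real octonion algebra 𝕆. Then there exist a real number c and an ℝ-algebra automorphism φ of 𝕆 such that y = c·φ(x). Moreover, if ‖x‖ = ‖y‖, then there exists an ℝ-algebra automorphism φ of 𝕆 with y = φ(x). -/
/-!
The pairs `(p, q)` of unit quaternions act on `𝕆 = ℍ × ℍ` by automorphisms
`(a, b) ↦ (q a q̄, p b q̄)`. A pure octonion `(a, b)` is thereby moved to `(‖a‖ i, ‖b‖)`; the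
automorphism exchanging `j = (j, 0)` with `ℓ = (0, 1)` turns this into the pure quaternion
`‖a‖ i + ‖b‖ j`, which a further conjugation moves to `√(‖a‖² + ‖b‖²) i`. Hence `Aut 𝕆` acts
transitively on each sphere of pure octonions, and rescaling gives the general case.
-/

noncomputable section

/-- The real octonions: the Cayley–Dickson double of the quaternions. -/
@[ext]
structure Octo : Type where
  a : Quaternion ℝ
  b : Quaternion ℝ

namespace Octo

instance : Zero Octo := ⟨⟨0, 0⟩⟩
instance : One Octo := ⟨⟨1, 0⟩⟩
instance : Add Octo := ⟨fun u v => ⟨u.a + v.a, u.b + v.b⟩⟩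
instance : Neg Octo := ⟨fun u => ⟨-u.a, -u.b⟩⟩
instance : SMul ℝ Octo := ⟨fun r u => ⟨r • u.a, r • u.b⟩⟩
instance : Mul Octo :=
  ⟨fun u v => ⟨u.a * v.a - star v.b * u.b, v.b * u.a + u.b * star v.a⟩⟩
instance : Star Octo := ⟨fun u => ⟨star u.a, -u.b⟩⟩

@[simp] lemma zero_a : (0 : Octo).a = 0 := rfl
@[simp] lemma zero_b : (0 : Octo).b = 0 := rfl
@[simp] lemma one_a : (1 : Octo).a = 1 := rfl
@[simp] lemma one_b : (1 : Octo).b = 0 := rfl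
@[simp] lemma add_a (u v : Octo) : (u + v).a = u.a + v.a := rfl
@[simp] lemma add_b (u v : Octo) : (u + v).b = u.b + v.b := rfl
@[simp] lemma neg_a (u : Octo) : (-u).a = -u.a := rfl
@[simp] lemma neg_b (u : Octo) : (-u).b = -u.b := rfl
@[simp] lemma smul_a (r : ℝ) (u : Octo) : (r • u).a = r • u.a := rfl
@[simp] lemma smul_b (r : ℝ) (u : Octo) : (r • u).b = r • u.b := rfl
@[simp] lemma mul_a (u v : Octo) : (u * v).a = u.a * v.a - star v.b * u.b := rfl
@[simp] lemma mul_b (u v : Octo) : (u * v).b = v.b * u.a + u.b * star v.a := rfl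
@[simp] lemma star_a (u : Octo) : (star u).a = star u.a := rfl
@[simp] lemma star_b (u : Octo) : (star u).b = -u.b := rfl

instance addCommGroup : AddCommGroup Octo where
  add_assoc u v w := by refine Octo.ext ?_ ?_ <;> simp only [add_a, add_b] <;> apply add_assoc
  zero_add u := by refine Octo.ext ?_ ?_ <;> simp only [add_a, add_b, zero_a, zero_b] <;> apply zero_add
  add_zero u := by refine Octo.ext ?_ ?_ <;> simp only [add_a, add_b, zero_a, zero_b] <;> apply add_zero
  nsmul := nsmulRec
  zsmul := zsmulRec
  neg_add_cancel u := by
    refine Octo.ext ?_ ?_ <;> simp only [add_a, add_b, neg_a, neg_b, zero_a, zero_b] <;> apply neg_add_cancel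
  add_comm u v := by refine Octo.ext ?_ ?_ <;> simp only [add_a, add_b] <;> apply add_comm

lemma left_distrib' (u v w : Octo) : u * (v + w) = u * v + u * w := by
  refine Octo.ext ?_ ?_ <;> simp only [mul_a, mul_b, add_a, add_b, star_add, mul_add, add_mul] <;> abel

lemma right_distrib' (u v w : Octo) : (u + v) * w = u * w + v * w := by
  refine Octo.ext ?_ ?_ <;> simp only [mul_a, mul_b, add_a, add_b, star_add, mul_add, add_mul] <;> abel

lemma zero_mul' (u : Octo) : 0 * u = 0 := by
  refine Octo.ext ?_ ?_ <;> simp only [mul_a, mul_b, zero_a, zero_b, mul_zero, zero_mul, sub_zero,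
    add_zero, zero_add, zero_sub, neg_zero]

lemma mul_zero' (u : Octo) : u * 0 = 0 := by
  refine Octo.ext ?_ ?_ <;> simp only [mul_a, mul_b, zero_a, zero_b, mul_zero, zero_mul, sub_zero,
    add_zero, zero_add, zero_sub, neg_zero, star_zero]

instance : NonUnitalNonAssocRing Octo :=
  { Octo.addCommGroup, (inferInstance : Mul Octo) with
    left_distrib := left_distrib'
    right_distrib := right_distrib'
    zero_mul := zero_mul'
    mul_zero := mul_zero' }

instance module : Module ℝ Octo where
  one_smul u := by refine Octo.ext ?_ ?_ <;> simp only [smul_a, smul_b] <;> apply one_smul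
  mul_smul r s u := by refine Octo.ext ?_ ?_ <;> simp only [smul_a, smul_b] <;> apply mul_smul
  smul_zero r := by refine Octo.ext ?_ ?_ <;> simp only [smul_a, smul_b, zero_a, zero_b] <;> apply smul_zero
  smul_add r u v := by refine Octo.ext ?_ ?_ <;> simp only [smul_a, smul_b, add_a, add_b] <;> apply smul_add
  add_smul r s u := by refine Octo.ext ?_ ?_ <;> simp only [smul_a, smul_b, add_a, add_b] <;> apply add_smul
  zero_smul u := by refine Octo.ext ?_ ?_ <;> simp only [smul_a, smul_b, zero_a, zero_b] <;> apply zero_smul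

instance : IsScalarTower ℝ Octo Octo :=
  ⟨fun r u v => by
    show (r • u) * v = r • (u * v)
    refine Octo.ext ?_ ?_ <;>
      simp only [mul_a, mul_b, smul_a, smul_b, smul_sub, smul_add, mul_smul_comm,
        smul_mul_assoc]⟩

instance : SMulCommClass ℝ Octo Octo :=
  ⟨fun r u v => by
    show r • (u * v) = u * (r • v)
    refine Octo.ext ?_ ?_ <;>
      simp only [mul_a, mul_b, smul_a, smul_b, smul_sub, smul_add, mul_smul_comm,
        smul_mul_assoc, Quaternion.star_smul]⟩

instance : StarRing Octo where
  star_involutive u := by refine Octo.ext ?_ ?_ <;> simp only [star_a, star_b, star_star, neg_neg]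
  star_mul u v := by
    refine Octo.ext ?_ ?_ <;>
      simp only [star_a, star_b, mul_a, mul_b, star_sub, star_add, star_mul, star_star, star_neg,
        mul_neg, neg_mul, neg_add_rev, neg_neg, neg_sub] <;> abel
  star_add u v := by refine Octo.ext ?_ ?_ <;> simp only [star_a, star_b, add_a, add_b, star_add, neg_add_rev] <;> abel

instance : StarModule ℝ Octo :=
  ⟨fun r u => by
    refine Octo.ext ?_ ?_ <;> simp only [star_a, star_b, smul_a, smul_b, Quaternion.star_smul,
      star_trivial, smul_neg]⟩

/-- The set of pure octonions (trace zero). -/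
def V : Set Octo := {x : Octo | x + star x = 0}

/-- The set of scalar octonions `ℝ·1`. -/
def scalars : Set Octo := Set.range fun r : ℝ => r • (1 : Octo)

/-- `φ` is an `ℝ`-algebra automorphism of the octonions. -/
def IsAut (φ : Octo ≃ₗ[ℝ] Octo) : Prop :=
  φ 1 = 1 ∧ ∀ x y : Octo, φ (x * y) = φ x * φ y

end Octo

/-- Number of occurrences of the variable `i` in a nonassociative word. -/
def FreeMagma.degCount {X : Type*} [DecidableEq X] : FreeMagma X → X → ℕ
  | .of x, i => if x = i then 1 else 0
  | .mul w₁ w₂, i => w₁.degCount i + w₂.degCount i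

/-- A nonassociative polynomial is multilinear if every variable occurs exactly once
in each of its monomials. -/
def IsMultilinear {R : Type*} [Semiring R] {n : ℕ}
    (p : FreeNonUnitalNonAssocAlgebra R (Fin n)) : Prop :=
  ∀ w ∈ p.coeff.support, ∀ i : Fin n, w.degCount i = 1

/-- Evaluation of a nonassociative polynomial on the octonions. -/
def Octo.eval {n : ℕ} (p : FreeNonUnitalNonAssocAlgebra ℝ (Fin n)) (v : Fin n → Octo) : Octo :=
  FreeNonUnitalNonAssocAlgebra.lift ℝ v p

namespace Unitary

variable {R : Type*} [Monoid R] [StarMul R]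

@[simp] lemma star_mul_self_mul (U : unitary R) (a : R) : star (U : R) * (U * a) = a := by
  rw [← mul_assoc, star_mul_self_of_mem U.prop, one_mul]

@[simp] lemma mul_star_self_mul (U : unitary R) (a : R) : (U : R) * (star (U : R) * a) = a := by
  rw [← mul_assoc, mul_star_self_of_mem U.prop, one_mul]

end Unitary

namespace Octo

open Quaternion

lemma IsAut.trans {φ ψ : Octo ≃ₗ[ℝ] Octo} (hφ : IsAut φ) (hψ : IsAut ψ) : IsAut (φ.trans ψ) :=
  ⟨by simp [hφ.1, hψ.1], fun x y => by simp [hφ.2, hψ.2]⟩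

lemma IsAut.symm {φ : Octo ≃ₗ[ℝ] Octo} (hφ : IsAut φ) : IsAut φ.symm :=
  ⟨φ.injective (by simp [hφ.1]), fun x y => φ.injective (by simp [hφ.2])⟩

def unitaryPairAut (p q : unitary ℍ) : Octo ≃ₗ[ℝ] Octo where
  toFun x := ⟨q * x.a * star q, p * x.b * star q⟩
  invFun x := ⟨star q * x.a * q, star p * x.b * q⟩
  map_add' x y := by ext1 <;> simp [mul_add, add_mul]
  map_smul' r x := by ext1 <;> simp
  left_inv x := by ext1 <;> simp [mul_assoc]
  right_inv x := by ext1 <;> simp [mul_assoc]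

lemma unitaryPairAut_apply (p q : unitary ℍ) (x : Octo) :
    unitaryPairAut p q x = ⟨q * x.a * star q, p * x.b * star q⟩ := rfl

lemma isAut_unitaryPairAut (p q : unitary ℍ) : IsAut (unitaryPairAut p q) := by
  refine ⟨by ext1 <;> simp [unitaryPairAut_apply], fun x y => ?_⟩
  ext1 <;> simp [unitaryPairAut_apply, mul_assoc, mul_sub, sub_mul, mul_add, add_mul]

-- `⟨r, i, j, k⟩` typed as `ℍ` rather than as a `QuaternionAlgebra`, so that `Quaternion` simp lemmas fire.
def mkQ (r i j k : ℝ) : ℍ := ⟨r, i, j, k⟩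

@[simp] lemma re_mkQ (r i j k : ℝ) : (mkQ r i j k).re = r := rfl
@[simp] lemma imI_mkQ (r i j k : ℝ) : (mkQ r i j k).imI = i := rfl
@[simp] lemma imJ_mkQ (r i j k : ℝ) : (mkQ r i j k).imJ = j := rfl
@[simp] lemma imK_mkQ (r i j k : ℝ) : (mkQ r i j k).imK = k := rfl

/-- The automorphism exchanging `j = (j, 0)` with `ℓ = (0, 1)` and `k` with `iℓ = (0, i)`. -/
def swapJL : Octo ≃ₗ[ℝ] Octo where
  toFun x := ⟨mkQ x.a.re x.a.imI x.b.re x.b.imI, mkQ x.a.imJ x.a.imK (-x.b.imJ) (-x.b.imK)⟩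
  invFun x := ⟨mkQ x.a.re x.a.imI x.b.re x.b.imI, mkQ x.a.imJ x.a.imK (-x.b.imJ) (-x.b.imK)⟩
  map_add' x y := by ext <;> simp <;> ring
  map_smul' r x := by ext <;> simp
  left_inv x := by ext <;> simp
  right_inv x := by ext <;> simp

lemma swapJL_apply (x : Octo) : swapJL x =
    ⟨mkQ x.a.re x.a.imI x.b.re x.b.imI, mkQ x.a.imJ x.a.imK (-x.b.imJ) (-x.b.imK)⟩ := rfl

lemma isAut_swapJL : IsAut swapJL := by
  refine ⟨by ext <;> simp [swapJL_apply], fun x y => ?_⟩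
  ext <;> simp [swapJL_apply] <;> ring

def qi : ℍ := mkQ 0 1 0 0
def qj : ℍ := mkQ 0 0 1 0

lemma norm_smul_qi_add_smul_qj (s r : ℝ) : ‖s • qi + r • qj‖ = √(s ^ 2 + r ^ 2) := by
  rw [norm_eq_sqrt_real_inner, inner_self]
  congr 1
  simp [normSq_def', qi, qj]

lemma mem_unitary_of_norm_eq_one {q : ℍ} (hq : ‖q‖ = 1) : q ∈ unitary ℍ := by
  have h : ((normSq q : ℝ) : ℍ) = 1 := by simp [normSq_eq_norm_mul_self, hq]
  exact ⟨by rw [star_mul_self, h], by rw [self_mul_star, h]⟩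

lemma inv_norm_smul_mem_unitary {w : ℍ} (hw : w ≠ 0) : ‖w‖⁻¹ • w ∈ unitary ℍ :=
  mem_unitary_of_norm_eq_one <| by
    rw [norm_smul, norm_inv, norm_norm, inv_mul_cancel₀ (norm_ne_zero_iff.mpr hw)]

lemma exists_unitary_mul_eq_norm (c : ℍ) : ∃ p : unitary ℍ, p * c = ‖c‖ := by
  by_cases hc : c = 0
  · exact ⟨1, by simp [hc]⟩
  refine ⟨⟨_, inv_norm_smul_mem_unitary (star_ne_zero.mpr hc)⟩, ?_⟩
  change ‖star c‖⁻¹ • star c * c = _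
  rw [norm_star, smul_mul_assoc, star_mul_self, normSq_eq_norm_mul_self, smul_coe,
    inv_mul_cancel_left₀ (norm_ne_zero_iff.mpr hc)]

/-- Conjugating by `u + v` carries `u` to `v`: since `u² = -‖u‖² = v²`, `(u + v) u = v (u + v)`. -/
lemma exists_unitary_conj_eq {u v : ℍ} (hu : u.re = 0) (hv : v.re = 0) (huv : ‖u‖ = ‖v‖)
    (h : u + v ≠ 0) : ∃ q : unitary ℍ, q * u * star q = v := by
  have hsq : u * u = v * v := by
    rw [← sq, ← sq, sq_eq_neg_normSq.mpr hu, sq_eq_neg_normSq.mpr hv, normSq_eq_norm_mul_self,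
      normSq_eq_norm_mul_self, huv]
  have hw : (u + v) * u = v * (u + v) := by rw [add_mul, mul_add, hsq, add_comm]
  let q : unitary ℍ := ⟨_, inv_norm_smul_mem_unitary h⟩
  have hq : (q : ℍ) * u = v * q := by
    simp only [q, smul_mul_assoc, mul_smul_comm, hw]
  exact ⟨q, by rw [hq, mul_assoc, Unitary.coe_mul_star_self, mul_one]⟩

lemma exists_unitary_conj_eq_norm_smul_qi {u : ℍ} (hu : u.re = 0) :
    ∃ q : unitary ℍ, q * u * star q = ‖u‖ • qi := by
  have hqi : ‖qi‖ = 1 := by simpa using norm_smul_qi_add_smul_qj 1 0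
  set t := ‖u‖ with ht
  by_cases h : u + t • qi = 0
  · refine ⟨⟨qj, mem_unitary_of_norm_eq_one (by simpa using norm_smul_qi_add_smul_qj 0 1)⟩, ?_⟩
    rw [eq_neg_of_add_eq_zero_left h]
    ext <;> simp [qi, qj]
  · exact exists_unitary_conj_eq (v := t • qi) hu (by simp [qi])
      (by rw [norm_smul, hqi, ht, norm_norm, mul_one]) h

def normSq (x : Octo) : ℝ := ‖x.a‖ ^ 2 + ‖x.b‖ ^ 2

lemma normSq_smul (r : ℝ) (x : Octo) : normSq (r • x) = r ^ 2 * normSq x := by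
  simp only [normSq, smul_a, smul_b, norm_smul, Real.norm_eq_abs, mul_pow, sq_abs]
  ring

lemma normSq_nonneg (x : Octo) : 0 ≤ normSq x := by
  unfold normSq
  positivity

lemma normSq_pos {x : Octo} (hx : x ≠ 0) : 0 < normSq x := by
  have h : x.a ≠ 0 ∨ x.b ≠ 0 := by
    contrapose! hx
    exact Octo.ext hx.1 hx.2
  rcases h with h | h <;> have := norm_pos_iff.mpr h <;> unfold normSq <;> positivity

lemma mul_star_self_eq_normSq_smul_one (x : Octo) : x * star x = normSq x • 1 := by
  ext1
  · ext <;> simp [normSq, sq, self_mul_star, star_mul_self, normSq_eq_norm_mul_self]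
  · simp

lemma normSq_eq_of_mul_star_self_eq {x y : Octo} (h : x * star x = y * star y) :
    normSq x = normSq y := by
  rw [mul_star_self_eq_normSq_smul_one, mul_star_self_eq_normSq_smul_one] at h
  simpa using congrArg (fun z : Octo => z.a.re) h

lemma re_eq_zero_of_mem_V {x : Octo} (hx : x ∈ V) : x.a.re = 0 :=
  star_eq_neg.mp (congrArg Octo.a (eq_neg_of_add_eq_zero_right hx))

lemma smul_mem_V (r : ℝ) {x : Octo} (hx : x ∈ V) : r • x ∈ V := by
  change r • x + star (r • x) = 0
  rw [StarModule.star_smul, star_trivial, ← smul_add, hx, smul_zero]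

lemma exists_isAut_apply_eq_sqrt_normSq_smul_qi {x : Octo} (hx : x ∈ V) :
    ∃ φ, IsAut φ ∧ φ x = ⟨√(normSq x) • qi, 0⟩ := by
  obtain ⟨q, hq⟩ := exists_unitary_conj_eq_norm_smul_qi (re_eq_zero_of_mem_V hx)
  obtain ⟨p, hp⟩ := exists_unitary_mul_eq_norm (x.b * star q)
  have h₁ : unitaryPairAut p q x = ⟨‖x.a‖ • qi, ‖x.b‖⟩ := by
    rw [unitaryPairAut_apply, hq, mul_assoc, hp, norm_mul,
      CStarRing.norm_of_mem_unitary (star q).prop, mul_one]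
  have h₂ (s r : ℝ) : swapJL ⟨s • qi, (r : ℍ)⟩ = ⟨s • qi + r • qj, 0⟩ := by
    ext <;> simp [swapJL_apply, qi, qj]
  obtain ⟨q', hq'⟩ := exists_unitary_conj_eq_norm_smul_qi (u := ‖x.a‖ • qi + ‖x.b‖ • qj)
    (by simp [qi, qj])
  refine ⟨(unitaryPairAut p q).trans (swapJL.trans (unitaryPairAut 1 q')),
    (isAut_unitaryPairAut p q).trans (isAut_swapJL.trans (isAut_unitaryPairAut 1 q')), ?_⟩
  rw [LinearEquiv.trans_apply, LinearEquiv.trans_apply, h₁, h₂, unitaryPairAut_apply, hq',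
    norm_smul_qi_add_smul_qj]
  simp [normSq]

lemma exists_isAut_apply_eq_of_normSq_eq {x y : Octo} (hx : x ∈ V) (hy : y ∈ V)
    (h : normSq x = normSq y) : ∃ φ, IsAut φ ∧ φ x = y := by
  obtain ⟨φ, hφ, hφx⟩ := exists_isAut_apply_eq_sqrt_normSq_smul_qi hx
  obtain ⟨ψ, hψ, hψy⟩ := exists_isAut_apply_eq_sqrt_normSq_smul_qi hy
  refine ⟨φ.trans ψ.symm, hφ.trans hψ.symm, ?_⟩
  rw [LinearEquiv.trans_apply, hφx, h, ← hψy, LinearEquiv.symm_apply_apply]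

end Octo

theorem pure_octonions_aut_equivalent_general (x y : Octo)
    (hx : x ∈ Octo.V) (hy : y ∈ Octo.V) (hx0 : x ≠ 0) :
    (∃ (c : ℝ) (φ : Octo ≃ₗ[ℝ] Octo), Octo.IsAut φ ∧ y = c • φ x) ∧
    (x * star x = y * star y → ∃ φ : Octo ≃ₗ[ℝ] Octo, Octo.IsAut φ ∧ y = φ x) := by
  refine ⟨?_, fun h => ?_⟩
  · have hNx := Octo.normSq_pos hx0
    set c := √(Octo.normSq y / Octo.normSq x)
    have hc : Octo.normSq (c • x) = Octo.normSq y := by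
      rw [Octo.normSq_smul, Real.sq_sqrt (div_nonneg (Octo.normSq_nonneg y) hNx.le),
        div_mul_cancel₀ _ hNx.ne']
    obtain ⟨φ, hφ, hφx⟩ := Octo.exists_isAut_apply_eq_of_normSq_eq (Octo.smul_mem_V c hx) hy hc
    exact ⟨c, φ, hφ, by rw [← map_smul, hφx]⟩
  · obtain ⟨φ, hφ, hφx⟩ :=
      Octo.exists_isAut_apply_eq_of_normSq_eq hx hy (Octo.normSq_eq_of_mul_star_self_eq h)
    exact ⟨φ, hφ, hφx.symm⟩

/-- Any two nonzero pure octonions are equivalent up to a scalar and an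
algebra automorphism; if they have the same norm, an automorphism alone suffices. -/
theorem pure_octonions_aut_equivalent (x y : Octo)
    (hx : x ∈ Octo.V) (hy : y ∈ Octo.V) (hx0 : x ≠ 0) (hy0 : y ≠ 0) :
    (∃ (c : ℝ) (φ : Octo ≃ₗ[ℝ] Octo), Octo.IsAut φ ∧ y = c • φ x) ∧
    (x * star x = y * star y → ∃ φ : Octo ≃ₗ[ℝ] Octo, Octo.IsAut φ ∧ y = φ x) :=
  pure_octonions_aut_equivalent_general x y hx hy hx0
end
end

section
/- Let F be a field of characteristic ≠ 2 and let W be an F-vector space of dimension at least 4 with linearly independent vectors e₁, e₂, e₃, e₄. In the exterior algebra Λ(W), consider the image of the multilinear polynomial p(x,y) = xy − yx, i.e. the set S = {ab − ba : a, b ∈ Λ(W)}. Then e₁∧e₂ ∈ S and e₃∧e₄ ∈ S, but e₁∧e₂ + e₃∧e₄ ∉ S; hence S is not an F-linear subspace of Λ(W). -/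
/-!
The grade involution splits `Λ(W)` into an even part, which is central, and an odd part, whose
elements anticommute and (as `2` is invertible) square to zero. Hence a commutator `ab - ba` is
`2 a₁ b₁` for the odd parts `a₁, b₁`, and squares to zero, whereas
`(e₁∧e₂ + e₃∧e₄)² = 2 e₁∧e₂∧e₃∧e₄ ≠ 0`. On the other hand `x∧y = [x/2, y]`.
-/

open ExteriorAlgebra

namespace CliffordAlgebra

variable {R M : Type*} [CommRing R] [AddCommGroup M] [Module R M] [Invertible (2 : R)]

theorem exists_eq_add_involute_eq_self_involute_eq_neg {Q : QuadraticForm R M}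
    (a : CliffordAlgebra Q) : ∃ a₀ a₁, a = a₀ + a₁ ∧ involute a₀ = a₀ ∧ involute a₁ = -a₁ := by
  refine ⟨⅟(2 : R) • (a + involute a), ⅟(2 : R) • (a - involute a), ?_, ?_, ?_⟩
  · rw [← smul_add, add_add_sub_cancel, ← two_smul R, smul_smul, invOf_mul_self, one_smul]
  · rw [map_smul, map_add, involute_involute, add_comm]
  · rw [map_smul, map_sub, involute_involute, ← smul_neg, neg_sub]

end CliffordAlgebra

namespace ExteriorAlgebra

open CliffordAlgebra (involute involute_ι exists_eq_add_involute_eq_self_involute_eq_neg)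

variable {R M : Type*} [CommRing R] [AddCommGroup M] [Module R M]

theorem ι_mul_eq_involute_mul (v : M) (y : ExteriorAlgebra R M) :
    ι R v * y = involute y * ι R v := by
  induction y using ExteriorAlgebra.induction with
  | algebraMap r => rw [AlgHom.commutes, Algebra.commutes]
  | ι w => rw [involute_ι, neg_mul, eq_neg_iff_add_eq_zero, ι_add_mul_swap]
  | mul a b ha hb => rw [← mul_assoc, ha, mul_assoc, hb, map_mul, mul_assoc]
  | add a b ha hb => rw [mul_add, ha, hb, map_add, add_mul]

theorem mul_comm_of_involute_eq {y : ExteriorAlgebra R M} (hy : involute y = y)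
    (x : ExteriorAlgebra R M) : x * y = y * x := by
  induction x using ExteriorAlgebra.induction with
  | algebraMap r => exact Algebra.commutes r y
  | ι v => rw [ι_mul_eq_involute_mul, hy]
  | mul a b ha hb => rw [mul_assoc, hb, ← mul_assoc, ha, mul_assoc]
  | add a b ha hb => rw [add_mul, ha, hb, mul_add]

theorem mul_eq_mul_involute_of_involute_eq_neg {y : ExteriorAlgebra R M} (hy : involute y = -y)
    (x : ExteriorAlgebra R M) : x * y = y * involute x := by
  induction x using ExteriorAlgebra.induction with
  | algebraMap r => rw [AlgHom.commutes, Algebra.commutes]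
  | ι v => rw [ι_mul_eq_involute_mul, hy, involute_ι, neg_mul, mul_neg]
  | mul a b ha hb => rw [mul_assoc, hb, ← mul_assoc, ha, mul_assoc, map_mul]
  | add a b ha hb => rw [add_mul, ha, hb, map_add, mul_add]

theorem involute_ι_mul_ι (x y : M) : involute (ι R x * ι R y) = ι R x * ι R y := by
  rw [map_mul, involute_ι, involute_ι, neg_mul_neg]

theorem ι_mul_ι_mul_self_eq_zero (x y : M) : ι R x * ι R y * (ι R x * ι R y) = 0 := by
  rw [← mul_assoc, ← mul_comm_of_involute_eq (involute_ι_mul_ι x y), ← mul_assoc, ι_sq_zero,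
    zero_mul, zero_mul]

theorem ι_mul_ι_add_ι_mul_ι_mul_self (x y z w : M) :
    (ι R x * ι R y + ι R z * ι R w) * (ι R x * ι R y + ι R z * ι R w) =
      (2 : R) • (ι R x * ι R y * ι R z * ι R w) := by
  rw [add_mul, mul_add, mul_add, ι_mul_ι_mul_self_eq_zero, ι_mul_ι_mul_self_eq_zero,
    ← mul_comm_of_involute_eq (involute_ι_mul_ι z w), two_smul, mul_assoc (ι R x * ι R y)]
  abel

section InvertibleTwo

variable [Invertible (2 : R)]

theorem ι_mul_ι_eq_commutator (x y : M) :
    ι R x * ι R y = (⅟(2 : R) • ι R x) * ι R y - ι R y * (⅟(2 : R) • ι R x) := by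
  rw [smul_mul_assoc, mul_smul_comm, ← smul_sub, eq_neg_of_add_eq_zero_left (ι_add_mul_swap y x),
    sub_neg_eq_add, ← two_smul R, smul_smul, invOf_mul_self, one_smul]

theorem commutator_mul_self_eq_zero (a b : ExteriorAlgebra R M) :
    (a * b - b * a) * (a * b - b * a) = 0 := by
  obtain ⟨a₀, a₁, rfl, ha₀, ha₁⟩ := exists_eq_add_involute_eq_self_involute_eq_neg a
  obtain ⟨b₀, b₁, rfl, hb₀, hb₁⟩ := exists_eq_add_involute_eq_self_involute_eq_neg b
  have anticomm : b₁ * a₁ = -(a₁ * b₁) := by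
    rw [mul_eq_mul_involute_of_involute_eq_neg ha₁, hb₁, mul_neg]
  have hcomm : (a₀ + a₁) * (b₀ + b₁) - (b₀ + b₁) * (a₀ + a₁) = (2 : R) • (a₁ * b₁) := by
    simp only [add_mul, mul_add, anticomm, two_smul]
    rw [mul_comm_of_involute_eq hb₀ a₀, mul_comm_of_involute_eq hb₀ a₁,
      ← mul_comm_of_involute_eq ha₀ b₁]
    abel
  have ha₁_sq : a₁ * a₁ = 0 := by
    have h : a₁ * a₁ = -(a₁ * a₁) :=
      (mul_eq_mul_involute_of_involute_eq_neg ha₁ a₁).trans (by rw [ha₁, mul_neg])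
    have h2 : (2 : R) • (a₁ * a₁) = 0 := by
      rw [two_smul]
      nth_rewrite 2 [h]
      exact add_neg_cancel _
    calc a₁ * a₁ = ⅟(2 : R) • (2 : R) • (a₁ * a₁) := by rw [smul_smul, invOf_mul_self, one_smul]
      _ = 0 := by rw [h2, smul_zero]
  have hsq : a₁ * b₁ * (a₁ * b₁) = 0 :=
    calc a₁ * b₁ * (a₁ * b₁) = a₁ * (b₁ * a₁) * b₁ := by simp only [mul_assoc]
      _ = -(a₁ * a₁ * b₁ * b₁) := by rw [anticomm, mul_neg, neg_mul, ← mul_assoc]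
      _ = 0 := by rw [ha₁_sq, zero_mul, zero_mul, neg_zero]
  rw [hcomm, smul_mul_smul_comm, hsq, smul_zero]

end InvertibleTwo

theorem ιMulti_ne_zero_of_linearIndependent {K V : Type*} [Field K] [AddCommGroup V] [Module K V]
    {n : ℕ} {v : Fin n → V} (hv : LinearIndependent K v) : ιMulti K n v ≠ 0 := by
  have h := (exteriorPower.ιMulti_family_linearIndependent_field (n := n) hv).ne_zero
    (Set.powersetCard.ofFinEmbEquiv (OrderIso.refl (Fin n)).toOrderEmbedding)
  rw [exteriorPower.ιMulti_family, Equiv.symm_apply_apply] at h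
  exact fun h0 => h (Subtype.ext h0)

end ExteriorAlgebra

theorem commutator_image_on_exterior_algebra_not_subspace_general
    (F : Type*) [Field F] (h2 : (2 : F) ≠ 0)
    (W : Type*) [AddCommGroup W] [Module F W]
    (e₁ e₂ e₃ e₄ : W) (hli : LinearIndependent F ![e₁, e₂, e₃, e₄]) :
    let S : Set (ExteriorAlgebra F W) :=
      {x | ∃ a b : ExteriorAlgebra F W, a * b - b * a = x}
    ι F e₁ * ι F e₂ ∈ S ∧ ι F e₃ * ι F e₄ ∈ S ∧
      ι F e₁ * ι F e₂ + ι F e₃ * ι F e₄ ∉ S ∧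
      ¬∃ U : Submodule F (ExteriorAlgebra F W), S = (U : Set (ExteriorAlgebra F W)) := by
  intro S
  let _ : Invertible (2 : F) := invertibleOfNonzero h2
  have mem_S (x y : W) : ι F x * ι F y ∈ S := ⟨_, _, (ι_mul_ι_eq_commutator x y).symm⟩
  have sum_not_mem : ι F e₁ * ι F e₂ + ι F e₃ * ι F e₄ ∉ S := by
    rintro ⟨a, b, hab⟩
    have hne : ι F e₁ * ι F e₂ * ι F e₃ * ι F e₄ ≠ 0 := by
      simpa [ιMulti_apply, List.ofFn_succ, mul_assoc] using ιMulti_ne_zero_of_linearIndependent hli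
    refine smul_ne_zero h2 hne ?_
    rw [← ι_mul_ι_add_ι_mul_ι_mul_self, ← hab, commutator_mul_self_eq_zero]
  refine ⟨mem_S e₁ e₂, mem_S e₃ e₄, sum_not_mem, ?_⟩
  rintro ⟨U, hU⟩
  rw [hU] at mem_S sum_not_mem
  exact sum_not_mem (U.add_mem (mem_S e₁ e₂) (mem_S e₃ e₄))

/-- In the exterior algebra of a vector space of dimension at least 4
over a field of characteristic ≠ 2, the image `S` of the multilinear polynomial
`p(x,y) = xy − yx` contains `e₁∧e₂` and `e₃∧e₄` but not their sum; hence `S` is not a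
linear subspace. -/
theorem commutator_image_on_exterior_algebra_not_subspace
    (F : Type*) [Field F] (h2 : (2 : F) ≠ 0)
    (W : Type*) [AddCommGroup W] [Module F W] (hrank : 4 ≤ Module.rank F W)
    (e₁ e₂ e₃ e₄ : W) (hli : LinearIndependent F ![e₁, e₂, e₃, e₄]) :
    let S : Set (ExteriorAlgebra F W) :=
      {x | ∃ a b : ExteriorAlgebra F W, a * b - b * a = x}
    ι F e₁ * ι F e₂ ∈ S ∧ ι F e₃ * ι F e₄ ∈ S ∧
      ι F e₁ * ι F e₂ + ι F e₃ * ι F e₄ ∉ S ∧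
      ¬∃ U : Submodule F (ExteriorAlgebra F W), S = (U : Set (ExteriorAlgebra F W)) :=
  commutator_image_on_exterior_algebra_not_subspace_general F h2 W e₁ e₂ e₃ e₄ hli
end
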